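/- arXiv:math/0703387 — 2 statements merged into one kernel-verified Lean document; each statement's English description precedes it below -/
import Mathlib

section
/- If X and Y are isomorphic normed spaces, then c_n(X) ≤ d(X,Y)^n · c_n(Y), where d(X,Y) is the Banach–Mazur distance. -/
/-!
Transporting unit functionals `gⱼ` on `X` through an isomorphism `e : X ≃ Y` and renormalising,
`fⱼ = gⱼ ∘ e⁻¹ / ‖gⱼ ∘ e⁻¹‖`, changes `sup_{‖y‖≤1} |∏ fⱼ(y)|` by a factor of at most
`(‖e‖ ‖e⁻¹‖)ⁿ`: each normalising factor is at most `‖e‖`, and `e⁻¹` maps the unit ball into the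
ball of radius `‖e⁻¹‖`, on which an `n`-fold product grows like the `n`-th power of the radius.
Comparing the infima for `e` and `e⁻¹` gives `cₙ(X) ≤ (‖e‖ ‖e⁻¹‖)ⁿ cₙ(Y)`, and the set of `t` with
`cₙ(X) ≤ tⁿ cₙ(Y)` is closed, so it also contains the infimum over all `e`.
-/

open scoped BigOperators

/-- `sup_{‖x‖≤1} |∏ⱼ fⱼ(x)|` for functionals `f₁,…,fₙ`. -/
noncomputable def supNormProd {𝕜 X : Type*} [RCLike 𝕜] [NormedAddCommGroup X]
    [NormedSpace 𝕜 X] {n : ℕ} (f : Fin n → (X →L[𝕜] 𝕜)) : ℝ :=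
  sSup {t : ℝ | ∃ x : X, ‖x‖ ≤ 1 ∧ t = ‖∏ j, f j x‖}

/-- The n-th linear polarization constant
`cₙ(X) = 1 / inf_{f₁,…,fₙ ∈ S_{X*}} sup_{‖x‖≤1} |∏ⱼ fⱼ(x)|`. -/
noncomputable def polarizationConst (𝕜 X : Type*) [RCLike 𝕜] [NormedAddCommGroup X]
    [NormedSpace 𝕜 X] (n : ℕ) : ℝ :=
  (sInf {y : ℝ | ∃ f : Fin n → (X →L[𝕜] 𝕜), (∀ j, ‖f j‖ = 1) ∧ y = supNormProd f})⁻¹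

section

variable {𝕜 X : Type*} [RCLike 𝕜] [NormedAddCommGroup X] [NormedSpace 𝕜 X] {n : ℕ}

section SupNormProd

lemma bddAbove_norm_prod_apply_unitBall (f : Fin n → (X →L[𝕜] 𝕜)) :
    BddAbove {t : ℝ | ∃ x : X, ‖x‖ ≤ 1 ∧ t = ‖∏ j, f j x‖} := by
  refine ⟨∏ j, ‖f j‖, ?_⟩
  rintro t ⟨x, hx, rfl⟩
  rw [norm_prod]
  exact Finset.prod_le_prod (fun j _ ↦ norm_nonneg _) (fun j _ ↦ (f j).unit_le_opNorm x hx)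

lemma norm_prod_apply_le_supNormProd (f : Fin n → (X →L[𝕜] 𝕜)) {x : X} (hx : ‖x‖ ≤ 1) :
    ‖∏ j, f j x‖ ≤ supNormProd f :=
  le_csSup (bddAbove_norm_prod_apply_unitBall f) ⟨x, hx, rfl⟩

lemma supNormProd_nonneg (f : Fin n → (X →L[𝕜] 𝕜)) : 0 ≤ supNormProd f :=
  Real.sSup_nonneg (by rintro t ⟨x, -, rfl⟩; exact norm_nonneg _)

lemma supNormProd_le {f : Fin n → (X →L[𝕜] 𝕜)} {C : ℝ} (hC : 0 ≤ C)
    (h : ∀ x : X, ‖x‖ ≤ 1 → ‖∏ j, f j x‖ ≤ C) : supNormProd f ≤ C :=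
  Real.sSup_le (by rintro t ⟨x, hx, rfl⟩; exact h x hx) hC

lemma norm_prod_apply_le_pow_mul_supNormProd (f : Fin n → (X →L[𝕜] 𝕜)) {x : X} {r : ℝ}
    (hr : 0 < r) (hx : ‖x‖ ≤ r) : ‖∏ j, f j x‖ ≤ r ^ n * supNormProd f := by
  set x' : X := (r : 𝕜)⁻¹ • x
  have hx' : ‖x'‖ ≤ 1 := by
    rw [norm_smul, norm_inv, RCLike.norm_ofReal, abs_of_pos hr]
    exact inv_mul_le_one_of_le₀ hx hr.le
  have hxx' : x = (r : 𝕜) • x' := (smul_inv_smul₀ (RCLike.ofReal_ne_zero.2 hr.ne') x).symm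
  calc ‖∏ j, f j x‖ = r ^ n * ‖∏ j, f j x'‖ := by
        simp only [hxx', map_smul, smul_eq_mul, Finset.prod_mul_distrib, Finset.prod_const,
          Finset.card_univ, Fintype.card_fin, norm_mul, norm_pow, RCLike.norm_ofReal,
          abs_of_pos hr]
    _ ≤ r ^ n * supNormProd f := by gcongr; exact norm_prod_apply_le_supNormProd f hx'

end SupNormProd

section PolarizationInf

noncomputable def polarizationInf (𝕜 X : Type*) [RCLike 𝕜] [NormedAddCommGroup X]
    [NormedSpace 𝕜 X] (n : ℕ) : ℝ :=
  sInf {y : ℝ | ∃ f : Fin n → (X →L[𝕜] 𝕜), (∀ j, ‖f j‖ = 1) ∧ y = supNormProd f}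

lemma polarizationConst_eq_inv : polarizationConst 𝕜 X n = (polarizationInf 𝕜 X n)⁻¹ := rfl

lemma polarizationInf_nonneg : 0 ≤ polarizationInf 𝕜 X n :=
  Real.sInf_nonneg (by rintro t ⟨f, -, rfl⟩; exact supNormProd_nonneg f)

end PolarizationInf

section Transport

variable {Y : Type*} [NormedAddCommGroup Y] [NormedSpace 𝕜 Y]

lemma norm_le_norm_comp_symm_mul (e : X ≃L[𝕜] Y) (g : X →L[𝕜] 𝕜) :
    ‖g‖ ≤ ‖g.comp (e.symm : Y →L[𝕜] X)‖ * ‖(e : X →L[𝕜] Y)‖ := by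
  have : g = (g.comp (e.symm : Y →L[𝕜] X)).comp (e : X →L[𝕜] Y) := by ext; simp
  conv_lhs => rw [this]
  exact ContinuousLinearMap.opNorm_comp_le _ _

lemma exists_supNormProd_le_of_equiv [Nontrivial X] (e : X ≃L[𝕜] Y)
    (g : Fin n → (X →L[𝕜] 𝕜)) (hg : ∀ j, ‖g j‖ = 1) :
    ∃ f : Fin n → (Y →L[𝕜] 𝕜), (∀ j, ‖f j‖ = 1) ∧
      supNormProd f ≤ (‖(e : X →L[𝕜] Y)‖ * ‖(e.symm : Y →L[𝕜] X)‖) ^ n * supNormProd g := by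
  set T : Fin n → (Y →L[𝕜] 𝕜) := fun j ↦ (g j).comp (e.symm : Y →L[𝕜] X)
  have hT : ∀ j, 1 ≤ ‖T j‖ * ‖(e : X →L[𝕜] Y)‖ := fun j ↦
    hg j ▸ norm_le_norm_comp_symm_mul e (g j)
  have hT_pos : ∀ j, 0 < ‖T j‖ := fun j ↦ pos_of_mul_pos_left (one_pos.trans_le (hT j))
    (norm_nonneg _)
  refine ⟨fun j ↦ ((‖T j‖ : 𝕜))⁻¹ • T j, fun j ↦ norm_smul_inv_norm (norm_pos_iff.1 (hT_pos j)),
    supNormProd_le (mul_nonneg (by positivity) (supNormProd_nonneg g)) fun y hy ↦ ?_⟩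
  have hTinv : ∀ j, ‖T j‖⁻¹ ≤ ‖(e : X →L[𝕜] Y)‖ := fun j ↦
    (inv_le_iff_one_le_mul₀ (hT_pos j)).2 (mul_comm (‖T j‖) _ ▸ hT j)
  have hy' : ‖e.symm y‖ ≤ ‖(e.symm : Y →L[𝕜] X)‖ := (e.symm : Y →L[𝕜] X).unit_le_opNorm y hy
  calc ‖∏ j, (((‖T j‖ : 𝕜))⁻¹ • T j) y‖ = (∏ j, ‖T j‖⁻¹) * ‖∏ j, g j (e.symm y)‖ := by
        simp only [FunLike.coe_smul, Pi.smul_apply, smul_eq_mul, Finset.prod_mul_distrib,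
          norm_mul, norm_prod, norm_inv, RCLike.norm_ofReal, abs_norm, T,
          ContinuousLinearMap.comp_apply, ContinuousLinearEquiv.coe_coe]
    _ ≤ ‖(e : X →L[𝕜] Y)‖ ^ n *
          (‖(e.symm : Y →L[𝕜] X)‖ ^ n * supNormProd g) := by
        gcongr
        · refine (Finset.prod_le_prod (fun j _ ↦ inv_nonneg.2 (norm_nonneg _))
            fun j _ ↦ hTinv j).trans_eq ?_
          rw [Finset.prod_const, Finset.card_univ, Fintype.card_fin]
        · exact norm_prod_apply_le_pow_mul_supNormProd g e.norm_symm_pos hy'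
    _ = _ := by ring

lemma polarizationInf_le_of_equiv [Nontrivial X] (e : X ≃L[𝕜] Y) :
    polarizationInf 𝕜 Y n ≤
      (‖(e : X →L[𝕜] Y)‖ * ‖(e.symm : Y →L[𝕜] X)‖) ^ n * polarizationInf 𝕜 X n := by
  have hd : 0 < (‖(e : X →L[𝕜] Y)‖ * ‖(e.symm : Y →L[𝕜] X)‖) ^ n :=
    pow_pos (mul_pos e.norm_pos e.norm_symm_pos) n
  obtain ⟨g, hg, -⟩ := exists_dual_vector' 𝕜 (0 : X)
  rw [← div_le_iff₀' hd]
  refine le_csInf ⟨_, fun _ ↦ g, fun _ ↦ hg, rfl⟩ ?_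
  rintro _ ⟨g, hg, rfl⟩
  obtain ⟨f, hf, hfg⟩ := exists_supNormProd_le_of_equiv e g hg
  rw [div_le_iff₀' hd]
  have hbdd : BddBelow {y : ℝ | ∃ f : Fin n → (Y →L[𝕜] 𝕜), (∀ j, ‖f j‖ = 1) ∧
      y = supNormProd f} := ⟨0, by rintro t ⟨f, -, rfl⟩; exact supNormProd_nonneg f⟩
  exact (csInf_le hbdd ⟨f, hf, rfl⟩).trans hfg

lemma polarizationConst_le_of_equiv [Nontrivial X] (e : X ≃L[𝕜] Y) :
    polarizationConst 𝕜 X n ≤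
      (‖(e : X →L[𝕜] Y)‖ * ‖(e.symm : Y →L[𝕜] X)‖) ^ n * polarizationConst 𝕜 Y n := by
  have : Nontrivial Y := e.toEquiv.symm.nontrivial
  have hYX := polarizationInf_le_of_equiv (n := n) e
  have hXY := polarizationInf_le_of_equiv (n := n) e.symm
  rw [polarizationConst_eq_inv, polarizationConst_eq_inv]
  rcases (polarizationInf_nonneg : 0 ≤ polarizationInf 𝕜 X n).eq_or_lt with hX | hX
  · -- `0⁻¹ = 0`: an infinite constant `cₙ(X)` is recorded as `0`
    rw [← hX, inv_zero]
    exact mul_nonneg (by positivity) (inv_nonneg.2 polarizationInf_nonneg)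
  · have hY : 0 < polarizationInf 𝕜 Y n := pos_of_mul_pos_right (hX.trans_le hXY) (by positivity)
    rw [← div_eq_mul_inv, inv_le_iff_one_le_mul₀ hX, div_mul_eq_mul_div, le_div_iff₀ hY, one_mul]
    exact hYX

end Transport

end

/-- `cₙ(X) ≤ d(X,Y)ⁿ · cₙ(Y)` where `d(X,Y)` is the Banach–Mazur distance. -/
theorem polarizationConst_le_banachMazur {𝕜 X Y : Type*} [RCLike 𝕜]
    [NormedAddCommGroup X] [NormedSpace 𝕜 X] [NormedAddCommGroup Y] [NormedSpace 𝕜 Y]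
    [Nontrivial X] (h : Nonempty (X ≃L[𝕜] Y)) (n : ℕ) :
    polarizationConst 𝕜 X n ≤
      (sInf {d : ℝ | ∃ e : X ≃L[𝕜] Y,
          d = ‖(e : X →L[𝕜] Y)‖ * ‖(e.symm : Y →L[𝕜] X)‖}) ^ n *
        polarizationConst 𝕜 Y n := by
  set S := {d : ℝ | ∃ e : X ≃L[𝕜] Y, d = ‖(e : X →L[𝕜] Y)‖ * ‖(e.symm : Y →L[𝕜] X)‖}
  have hS : S.Nonempty := let ⟨e⟩ := h; ⟨_, e, rfl⟩
  have hS_bdd : BddBelow S := ⟨0, by rintro _ ⟨e, rfl⟩; positivity⟩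
  set C := {t : ℝ | polarizationConst 𝕜 X n ≤ t ^ n * polarizationConst 𝕜 Y n}
  have hC : IsClosed C := isClosed_le continuous_const (by fun_prop)
  have hSC : S ⊆ C := by
    rintro _ ⟨e, rfl⟩
    exact polarizationConst_le_of_equiv e
  exact closure_minimal hSC hC (csInf_mem_closure hS hS_bdd)
end

section
/- For the unit interval I = [−1,1] ⊂ ℝ, any real polynomial p of degree ≤ n with ‖p‖_I ≤ 1, and any x ∈ (−1,1), the Bernstein–Szegő inequality holds: |p'(x)| ≤ n·√(1 − p(x)²)/√(1 − x²). -/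
/-!
Substituting `x = cos θ` turns `p` into a trigonometric polynomial `T θ = p (cos θ)` of degree
at most `n` with `|T| ≤ 1`, and the claim becomes `T'² + n² T² ≤ n²`. If this failed at `θ₀`,
one could choose `c > 1` and `φ` so that `h θ = c cos (n θ + φ) - T θ` has a double zero at `θ₀`.
Since `c > 1 ≥ |T|`, `h` changes sign between consecutive extrema of `c cos (n θ + φ)`, which
together with `θ₀` gives `2n + 1` zeros of `h` on `[θ₀, θ₀ + 2π]`; by Rolle's theorem and the
double zero, `h'` has `2n + 1` zeros on `[θ₀, θ₀ + 2π)`. But `h'` is a trigonometric polynomial of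
degree at most `n`, hence vanishes, and `h` is constant, contradicting its sign changes.
-/

open Polynomial Real Set Finset

theorem exists_mem_Ioo_eq_zero_of_mul_neg {f : ℝ → ℝ} (hf : Continuous f) {a b : ℝ} (hab : a ≤ b)
    (hfab : f a * f b < 0) : ∃ x ∈ Ioo a b, f x = 0 := by
  rcases mul_neg_iff.mp hfab with ⟨ha, hb⟩ | ⟨ha, hb⟩
  · exact intermediate_value_Ioo' hab hf.continuousOn ⟨hb, ha⟩
  · exact intermediate_value_Ioo hab hf.continuousOn ⟨ha, hb⟩

theorem exists_finset_zeros_of_mul_neg {f : ℝ → ℝ} (hf : Continuous f) {τ : ℕ → ℝ}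
    (hτ : StrictMono τ) (halt : ∀ j, f (τ j) * f (τ (j + 1)) < 0) (m : ℕ) :
    ∃ s : Finset ℝ, #s = m ∧ ∀ x ∈ s, x ∈ Ioo (τ 0) (τ m) ∧ f x = 0 := by
  choose z hz hfz using fun j =>
    exists_mem_Ioo_eq_zero_of_mul_neg hf (hτ (Nat.lt_succ_self j)).le (halt j)
  have hz_mono : StrictMono z := strictMono_nat_of_lt_succ fun j => (hz j).2.trans (hz (j + 1)).1
  refine ⟨(range m).image z, by rw [card_image_of_injective _ hz_mono.injective, card_range], ?_⟩
  intro x hx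
  obtain ⟨j, hj, rfl⟩ := Finset.mem_image.mp hx
  rw [Finset.mem_range] at hj
  exact ⟨⟨(hτ.monotone j.zero_le).trans_lt (hz j).1,
    (hz j).2.trans_le (hτ.monotone (Nat.succ_le_of_lt hj))⟩, hfz j⟩

theorem card_le_encard_zeros_deriv_add_one {f f' : ℝ → ℝ} (hf : ∀ x, HasDerivAt f (f' x) x)
    {a b : ℝ} {s : Finset ℝ} (hs : ∀ x ∈ s, x ∈ Icc a b ∧ f x = 0) :
    (#s : ℕ∞) ≤ {x ∈ Ioo a b | f' x = 0}.encard + 1 := by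
  rcases Set.finite_or_infinite {x ∈ Ioo a b | f' x = 0} with hfin | hinf
  · rw [← hfin.coe_toFinset, encard_coe_eq_coe_finsetCard]
    norm_cast
    refine card_le_of_interleaved fun x hx y hy hxy _ => ?_
    have hcont : Continuous f := continuous_iff_continuousAt.mpr fun x => (hf x).continuousAt
    obtain ⟨z, hz, hf'z⟩ := exists_hasDerivAt_eq_zero hxy hcont.continuousOn
      (((hs x hx).2).trans ((hs y hy).2).symm) fun z _ => hf z
    refine ⟨z, ?_, hz.1, hz.2⟩
    rw [Set.Finite.mem_toFinset]
    exact ⟨⟨(hs x hx).1.1.trans_lt hz.1, hz.2.trans_le (hs y hy).1.2⟩, hf'z⟩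
  · rw [hinf.encard_eq]; simp

theorem exists_strictMono_cos_alternating {n : ℕ} (hn : 0 < n) (φ θ₀ : ℝ) :
    ∃ τ : ℕ → ℝ, StrictMono τ ∧ θ₀ < τ 0 ∧ τ (2 * n - 1) ≤ θ₀ + 2 * π ∧
      ∀ j, |cos (n * τ j + φ)| = 1 ∧ cos (n * τ (j + 1) + φ) = -cos (n * τ j + φ) := by
  have hn' : (0 : ℝ) < n := by exact_mod_cast hn
  have hK := Int.floor_le ((n * θ₀ + φ) / π)
  have hK' := Int.lt_floor_add_one ((n * θ₀ + φ) / π)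
  set K := ⌊(n * θ₀ + φ) / π⌋
  rw [le_div_iff₀ pi_pos] at hK
  rw [div_lt_iff₀ pi_pos] at hK'
  have hτ : ∀ j : ℕ, n * (((K + 1 + j) * π - φ) / n) + φ = (K + 1 + j : ℤ) * π := by
    intro j; push_cast; field_simp; ring
  refine ⟨fun j => ((K + 1 + j) * π - φ) / n, fun i j hij => ?_, ?_, ?_, fun j => ⟨?_, ?_⟩⟩
  · have : (i : ℝ) < j := by exact_mod_cast hij
    dsimp only
    gcongr
  · rw [lt_div_iff₀ hn']; push_cast; linarith
  · rw [div_le_iff₀ hn', Nat.cast_sub (by omega)]; push_cast; nlinarith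
  · rw [hτ]; exact abs_cos_int_mul_pi _
  · rw [hτ, hτ, ← cos_add_pi]; push_cast; ring_nf

/-- A real trigonometric polynomial of degree at most `n` is encoded by the polynomial `P` of
degree at most `2 * n` with `P (e^{iθ}) = e^{inθ} f θ`. -/
def trigPolyDegreeLE (n : ℕ) : Submodule ℝ (ℝ → ℝ) where
  carrier := {f | ∃ P : ℂ[X], P.natDegree ≤ 2 * n ∧
    ∀ θ : ℝ, P.eval (Complex.exp (θ * Complex.I)) = Complex.exp (θ * Complex.I) ^ n * f θ}
  zero_mem' := ⟨0, by simp⟩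
  add_mem' := by
    rintro f g ⟨P, hP, hPf⟩ ⟨Q, hQ, hQg⟩
    refine ⟨P + Q, (natDegree_add_le _ _).trans (max_le hP hQ), fun θ => ?_⟩
    simp [hPf, hQg, mul_add]
  smul_mem' := by
    rintro a f ⟨P, hP, hPf⟩
    refine ⟨C (a : ℂ) * P, (natDegree_C_mul_le _ _).trans hP, fun θ => ?_⟩
    simp [hPf]
    ring

namespace trigPolyDegreeLE

variable {m n : ℕ} {f g : ℝ → ℝ}

theorem mono (hmn : m ≤ n) : trigPolyDegreeLE m ≤ trigPolyDegreeLE n := by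
  rintro f ⟨P, hP, hPf⟩
  refine ⟨X ^ (n - m) * P, natDegree_mul_le.trans ?_, fun θ => ?_⟩
  · rw [natDegree_X_pow]; omega
  · rw [eval_mul, eval_X_pow, hPf, ← mul_assoc, ← pow_add, Nat.sub_add_cancel hmn]

theorem mul_mem (hf : f ∈ trigPolyDegreeLE m) (hg : g ∈ trigPolyDegreeLE n) :
    f * g ∈ trigPolyDegreeLE (m + n) := by
  obtain ⟨P, hP, hPf⟩ := hf
  obtain ⟨Q, hQ, hQg⟩ := hg
  refine ⟨P * Q, natDegree_mul_le.trans (by omega), fun θ => ?_⟩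
  simp only [eval_mul, hPf, hQg, Pi.mul_apply, Complex.ofReal_mul]
  ring

theorem one_mem : (1 : ℝ → ℝ) ∈ trigPolyDegreeLE 0 := ⟨1, by simp⟩

theorem pow_mem (hf : f ∈ trigPolyDegreeLE m) (k : ℕ) : f ^ k ∈ trigPolyDegreeLE (m * k) := by
  induction k with
  | zero => exact one_mem
  | succ k ih => rw [pow_succ, mul_add, mul_one]; exact mul_mem ih hf

theorem polynomial_eval_mem (hf : f ∈ trigPolyDegreeLE m) {p : ℝ[X]} (hp : p.natDegree ≤ n) :
    (fun θ => p.eval (f θ)) ∈ trigPolyDegreeLE (m * n) := by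
  simp_rw [eval_eq_sum_range]
  rw [show (fun θ => ∑ i ∈ range (p.natDegree + 1), p.coeff i * f θ ^ i)
    = ∑ i ∈ range (p.natDegree + 1), p.coeff i • f ^ i by ext; simp]
  refine Submodule.sum_mem _ fun i hi => Submodule.smul_mem _ _ (mono ?_ (pow_mem hf i))
  have := Finset.mem_range_succ_iff.mp hi
  exact Nat.mul_le_mul_left m (this.trans hp)

theorem cos_mul_add_mem (n : ℕ) (φ : ℝ) :
    (fun θ => Real.cos (n * θ + φ)) ∈ trigPolyDegreeLE n := by
  refine ⟨C (Complex.exp (φ * Complex.I) / 2) * X ^ (2 * n) +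
      C (Complex.exp (-φ * Complex.I) / 2),
    (natDegree_add_le _ _).trans (max_le ((natDegree_C_mul_le _ _).trans (by simp)) (by simp)),
    fun θ => ?_⟩
  have e1 : Complex.exp (θ * Complex.I) ^ n * Complex.exp ((n * θ + φ : ℝ) * Complex.I) =
      Complex.exp (φ * Complex.I) * Complex.exp (θ * Complex.I) ^ (2 * n) := by
    simp only [← Complex.exp_nat_mul, ← Complex.exp_add]; push_cast; ring_nf
  have e2 : Complex.exp (θ * Complex.I) ^ n * Complex.exp (-(n * θ + φ : ℝ) * Complex.I) =
      Complex.exp (-φ * Complex.I) := by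
    simp only [← Complex.exp_nat_mul, ← Complex.exp_add]; push_cast; ring_nf
  simp only [eval_add, eval_mul, eval_C, eval_pow, eval_X, Complex.ofReal_cos, Complex.cos]
  linear_combination -(e1 + e2) / 2

theorem sin_mul_add_mem (n : ℕ) (φ : ℝ) :
    (fun θ => Real.sin (n * θ + φ)) ∈ trigPolyDegreeLE n := by
  convert cos_mul_add_mem n (φ - π / 2) using 2 with θ
  rw [← Real.cos_sub_pi_div_two]; ring_nf

theorem encard_zeros_le (hf : f ∈ trigPolyDegreeLE n) (hf0 : f ≠ 0) (a : ℝ) :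
    {θ ∈ Ico a (a + 2 * π) | f θ = 0}.encard ≤ (2 * n : ℕ) := by
  obtain ⟨P, hP, hPf⟩ := hf
  have hP0 : P ≠ 0 := by
    rintro rfl
    refine hf0 (funext fun θ => ?_)
    simpa [Complex.exp_ne_zero] using (hPf θ).symm
  have hinj : InjOn (fun θ : ℝ => Complex.exp (θ * Complex.I)) (Ico a (a + 2 * π)) := by
    rw [show (fun θ : ℝ => Complex.exp (θ * Complex.I)) = Subtype.val ∘ Circle.exp from
      funext fun θ => (Circle.coe_exp θ).symm]
    exact Subtype.val_injective.comp_injOn (Circle.exp_injOn_Ico (by simp))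
  calc {θ ∈ Ico a (a + 2 * π) | f θ = 0}.encard
      = ((fun θ : ℝ => Complex.exp (θ * Complex.I)) '' {θ ∈ Ico a (a + 2 * π) | f θ = 0}).encard :=
        ((hinj.mono fun _ hθ => hθ.1).encard_image).symm
    _ ≤ (P.roots.toFinset : Set ℂ).encard := by
        refine encard_le_encard ?_
        rintro _ ⟨θ, ⟨-, hθ⟩, rfl⟩
        simp [mem_roots hP0, hPf, hθ]
    _ ≤ (2 * n : ℕ) := by
        rw [encard_coe_eq_coe_finsetCard, Nat.cast_le]
        exact (Multiset.toFinset_card_le _).trans (P.card_roots'.trans hP)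

theorem periodic (hf : f ∈ trigPolyDegreeLE n) : Function.Periodic f (2 * π) := by
  intro θ
  obtain ⟨P, -, hPf⟩ := hf
  have hz : Complex.exp (↑(θ + 2 * π) * Complex.I) = Complex.exp (θ * Complex.I) := by
    rw [Complex.ofReal_add, add_mul, Complex.exp_add, Complex.ofReal_mul, Complex.ofReal_ofNat,
      Complex.exp_two_pi_mul_I, mul_one]
  have := (hPf (θ + 2 * π)).symm.trans ((congrArg P.eval hz).trans (hPf θ))
  rw [hz] at this
  exact_mod_cast mul_left_cancel₀ (pow_ne_zero n (Complex.exp_ne_zero _)) this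

end trigPolyDegreeLE

theorem exists_one_lt_mul_cos_eq {n : ℕ} (hn : 0 < n) {u v : ℝ}
    (huv : n ^ 2 < v ^ 2 + n ^ 2 * u ^ 2) :
    ∃ c ψ : ℝ, 1 < c ∧ c * cos ψ = u ∧ c * n * sin ψ = -v := by
  have hn' : (0 : ℝ) < n := by exact_mod_cast hn
  set w : ℂ := ⟨u, -v / n⟩
  refine ⟨‖w‖, Complex.arg w, ?_, Complex.norm_mul_cos_arg w, ?_⟩
  · rw [← one_lt_sq_iff₀ (norm_nonneg _), Complex.sq_norm, Complex.normSq_mk, ← sub_pos]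
    field_simp
    nlinarith
  · rw [mul_right_comm, Complex.norm_mul_sin_arg w]
    exact div_mul_cancel₀ (-v) hn'.ne'

/-- Rolle's theorem on the circle: the `2 * n + 1` zeros of `h` in `[θ₀, θ₀ + 2π]` give `2 * n`
zeros of `d` in `(θ₀, θ₀ + 2π)`, and the double zero at `θ₀` one more. -/
theorem trigPolyDegreeLE.eq_zero_of_hasDerivAt_of_zeros {n : ℕ} {h d : ℝ → ℝ}
    (hd : d ∈ trigPolyDegreeLE n) (hhd : ∀ θ, HasDerivAt h (d θ) θ)
    (hper : Function.Periodic h (2 * π)) {θ₀ : ℝ} (hhθ₀ : h θ₀ = 0) (hdθ₀ : d θ₀ = 0)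
    {s : Finset ℝ} (hs_card : #s = 2 * n - 1) (hs : ∀ x ∈ s, x ∈ Ioo θ₀ (θ₀ + 2 * π) ∧ h x = 0) :
    d = 0 := by
  by_contra hd0
  set Z := insert θ₀ (insert (θ₀ + 2 * π) s)
  have hZ_card : 2 * n + 1 ≤ #Z := by
    have h1 : θ₀ + 2 * π ∉ s := fun hx => (hs _ hx).1.2.ne rfl
    have h2 : θ₀ ∉ insert (θ₀ + 2 * π) s := by
      rw [Finset.mem_insert, not_or]
      exact ⟨by linarith [pi_pos], fun hx => (hs _ hx).1.1.ne rfl⟩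
    rw [card_insert_of_notMem h2, card_insert_of_notMem h1, hs_card]
    omega
  have hZ : ∀ x ∈ Z, x ∈ Icc θ₀ (θ₀ + 2 * π) ∧ h x = 0 := by
    simp only [Z, Finset.mem_insert]
    rintro x (rfl | rfl | hx)
    · exact ⟨⟨le_rfl, by linarith [pi_pos]⟩, hhθ₀⟩
    · exact ⟨⟨by linarith [pi_pos], le_rfl⟩, (hper θ₀).trans hhθ₀⟩
    · exact ⟨Ioo_subset_Icc_self (hs x hx).1, (hs x hx).2⟩
  have hsub : insert θ₀ {x ∈ Ioo θ₀ (θ₀ + 2 * π) | d x = 0} ⊆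
      {x ∈ Ico θ₀ (θ₀ + 2 * π) | d x = 0} := by
    rintro x (rfl | ⟨hx, hdx⟩)
    · exact ⟨⟨le_rfl, by linarith [pi_pos]⟩, hdθ₀⟩
    · exact ⟨Ioo_subset_Ico_self hx, hdx⟩
  have hupper := (encard_le_encard hsub).trans (encard_zeros_le hd hd0 θ₀)
  rw [encard_insert_of_notMem (fun hx => hx.1.1.ne rfl)] at hupper
  have hlower := card_le_encard_zeros_deriv_add_one hhd hZ
  have := (Nat.cast_le.mpr hZ_card).trans (hlower.trans hupper)
  norm_cast at this
  omega

theorem bernstein_szego_trigPoly {n : ℕ} (hn : 0 < n) {T T' : ℝ → ℝ}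
    (hT : T ∈ trigPolyDegreeLE n) (hT' : T' ∈ trigPolyDegreeLE n)
    (hderiv : ∀ θ, HasDerivAt T (T' θ) θ) (hbound : ∀ θ, |T θ| ≤ 1) (θ₀ : ℝ) :
    T' θ₀ ^ 2 + n ^ 2 * T θ₀ ^ 2 ≤ n ^ 2 := by
  by_contra! hgt
  obtain ⟨c, ψ, hc, hcos, hsin⟩ := exists_one_lt_mul_cos_eq hn hgt
  set φ := ψ - n * θ₀
  have hθ₀ : n * θ₀ + φ = ψ := by ring
  set h : ℝ → ℝ := fun θ => c * cos (n * θ + φ) - T θ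
  set d : ℝ → ℝ := fun θ => -(c * n) * sin (n * θ + φ) - T' θ
  have hhd : ∀ θ, HasDerivAt h (d θ) θ := fun θ =>
    (((((hasDerivAt_id θ).const_mul (n : ℝ)).add_const φ).cos.const_mul c).sub
      (hderiv θ)).congr_deriv (by simp only [d, id]; ring)
  have hd : d ∈ trigPolyDegreeLE n :=
    Submodule.sub_mem _ (Submodule.smul_mem _ _ (trigPolyDegreeLE.sin_mul_add_mem n φ)) hT'
  have hper : Function.Periodic h (2 * π) := fun θ => by
    simp only [h, mul_add, add_right_comm _ _ φ, cos_add_nat_mul_two_pi,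
      trigPolyDegreeLE.periodic hT θ]
  have hhθ₀ : h θ₀ = 0 := by simp only [h, hθ₀, hcos, sub_self]
  have hdθ₀ : d θ₀ = 0 := by
    simp only [d, hθ₀]
    linear_combination -hsin
  obtain ⟨τ, hτ_mono, hτ0, hτ_last, hτ_cos⟩ := exists_strictMono_cos_alternating hn φ θ₀
  have halt : ∀ j, h (τ j) * h (τ (j + 1)) < 0 := by
    intro j
    obtain ⟨habs, hnext⟩ := hτ_cos j
    simp only [h, hnext]
    have h1 := abs_le.mp (hbound (τ j))
    have h2 := abs_le.mp (hbound (τ (j + 1)))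
    rcases abs_eq (zero_le_one' ℝ) |>.mp habs with hcos | hcos <;> rw [hcos] <;> nlinarith
  have hcont : Continuous h := continuous_iff_continuousAt.mpr fun θ => (hhd θ).continuousAt
  obtain ⟨s, hs_card, hs⟩ := exists_finset_zeros_of_mul_neg hcont hτ_mono halt (2 * n - 1)
  have hd0 := trigPolyDegreeLE.eq_zero_of_hasDerivAt_of_zeros hd hhd hper hhθ₀ hdθ₀ hs_card
    fun x hx => ⟨⟨hτ0.trans (hs x hx).1.1, (hs x hx).1.2.trans_le hτ_last⟩, (hs x hx).2⟩
  have hconst := is_const_of_deriv_eq_zero (fun θ => (hhd θ).differentiableAt)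
    (fun θ => by rw [(hhd θ).deriv, hd0, Pi.zero_apply]) (τ 0) θ₀
  have := halt 0
  rw [hconst, hhθ₀, zero_mul] at this
  exact lt_irrefl 0 this

theorem Polynomial.one_sub_sq_mul_derivative_sq_le {n : ℕ} {p : ℝ[X]} (hdeg : p.natDegree ≤ n)
    (hbd : ∀ t ∈ Icc (-1 : ℝ) 1, |p.eval t| ≤ 1) {x : ℝ} (hx : x ∈ Icc (-1 : ℝ) 1) :
    (1 - x ^ 2) * (derivative p).eval x ^ 2 ≤ n ^ 2 * (1 - p.eval x ^ 2) := by
  obtain rfl | hn := Nat.eq_zero_or_pos n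
  · obtain ⟨a, rfl⟩ := natDegree_eq_zero.mp (Nat.le_zero.mp hdeg)
    simp
  have hcos : Real.cos ∈ trigPolyDegreeLE 1 := by
    simpa using trigPolyDegreeLE.cos_mul_add_mem 1 0
  have hsin : Real.sin ∈ trigPolyDegreeLE 1 := by
    simpa using trigPolyDegreeLE.sin_mul_add_mem 1 0
  have hT : (fun θ => p.eval (cos θ)) ∈ trigPolyDegreeLE n := by
    simpa using trigPolyDegreeLE.polynomial_eval_mem hcos hdeg
  have hT' : (fun θ => (derivative p).eval (cos θ) * -sin θ) ∈ trigPolyDegreeLE n := by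
    have := trigPolyDegreeLE.mul_mem
      (trigPolyDegreeLE.polynomial_eval_mem hcos ((natDegree_derivative_le p).trans
        (Nat.sub_le_sub_right hdeg 1))) (Submodule.neg_mem _ hsin)
    rwa [one_mul, Nat.sub_add_cancel hn] at this
  have key := bernstein_szego_trigPoly hn hT hT'
    (fun θ => (p.hasDerivAt (cos θ)).comp θ (hasDerivAt_cos θ))
    (fun θ => hbd _ ⟨neg_one_le_cos θ, cos_le_one θ⟩) (arccos x)
  simp only [cos_arccos hx.1 hx.2, sin_arccos] at key
  rw [mul_neg, neg_sq, mul_pow, sq_sqrt (by nlinarith [hx.1, hx.2])] at key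
  linarith

/-- Bernstein–Szegő inequality on `[-1,1]`: if `deg p ≤ n` and `|p| ≤ 1` on `[-1,1]`,
then `|p'(x)| ≤ n √(1-p(x)²)/√(1-x²)` for `x ∈ (-1,1)`. -/
theorem bernstein_szego (n : ℕ) (p : Polynomial ℝ) (hdeg : p.natDegree ≤ n)
    (hbd : ∀ t ∈ Set.Icc (-1 : ℝ) 1, |p.eval t| ≤ 1)
    (x : ℝ) (hx : x ∈ Set.Ioo (-1 : ℝ) 1) :
    |(Polynomial.derivative p).eval x| ≤
      (n : ℝ) * Real.sqrt (1 - p.eval x ^ 2) / Real.sqrt (1 - x ^ 2) := by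
  have hx2 : 0 < 1 - x ^ 2 := by nlinarith [hx.1, hx.2]
  have key := one_sub_sq_mul_derivative_sq_le hdeg hbd (Ioo_subset_Icc_self hx)
  rw [le_div_iff₀ (sqrt_pos.mpr hx2), ← abs_of_pos (sqrt_pos.mpr hx2), ← abs_mul,
    ← sqrt_sq n.cast_nonneg, ← sqrt_mul (sq_nonneg _)]
  refine abs_le_sqrt ?_
  rw [mul_pow, sq_sqrt hx2.le]
  linarith
end
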